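/- For words s of weight λ and t of weight λ' (λ ⊢ m), the set G(s,t) = {w ∈ S_m : sgn_s(w·t) ≠ 0} satisfies G(s,t)⁻¹ = G(t,s), i.e. w ∈ G(s,t) if and only if w⁻¹ ∈ G(t,s). -/

import Mathlib

open Finset

/-- Number of inversions of a word given as a list. -/
def invCount : List ℕ → ℕ
  | [] => 0
  | a :: l => l.countP (fun b => decide (b < a)) + invCount l

/-- Sign of a finite sequence: its permutation sign if it is a permutation of `1,…,k`
(`k` = its length), and `0` otherwise. -/
def seqSgn (l : List ℕ) : ℤ :=
  if (l : Multiset ℕ) = ((List.range' 1 l.length : List ℕ) : Multiset ℕ) then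
    (-1) ^ invCount l
  else 0

/-- Positions (in increasing order) of the letter `i` in the word `s`. -/
def blockList {m : ℕ} (s : Fin m → ℕ) (i : ℕ) : List (Fin m) :=
  (List.finRange m).filter (fun p => decide (s p = i))

/-- The blockwise signature `sgn_s(σ)`: the product over the blocks of `s` of the signs of
`σ` read along the block (in increasing position order). -/
def sgnWord {m : ℕ} (s σ : Fin m → ℕ) : ℤ :=
  ∏ i ∈ Finset.range m, seqSgn ((blockList s (i + 1)).map σ)

/-- The action of `S_m` on words of length `m` by permuting positions: `(π·t) i = t (π⁻¹ i)`. -/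
def pact {m : ℕ} (π : Equiv.Perm (Fin m)) (t : Fin m → ℕ) : Fin m → ℕ :=
  fun p => t (π⁻¹ p)

/-- `w` is a word of weight `L`: the letter `i+1` occurs exactly `L.getD i 0` times. -/
def hasWeight {m : ℕ} (w : Fin m → ℕ) (L : List ℕ) : Prop :=
  ∀ i : ℕ, (Finset.univ.filter (fun p => w p = i + 1)).card = L.getD i 0

/-- `L` is a partition of `m`. -/
def IsPartitionOf (m : ℕ) (L : List ℕ) : Prop :=
  L.Pairwise (· ≥ ·) ∧ (∀ p ∈ L, 0 < p) ∧ L.sum = m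

/-- The conjugate partition, as a list: its `j`-th part is `#{i : L i ≥ j+1}`. -/
def conjList (L : List ℕ) : List ℕ :=
  (List.range (L.headD 0)).map (fun j => L.countP (fun p => decide (j + 1 ≤ p)))

/-- The inversion sign `(−1)^w` of a word. -/
def wordSign {m : ℕ} (w : Fin m → ℕ) : ℤ :=
  (-1) ^ invCount ((List.finRange m).map w)

/-- The inversion sign `(−1)^λ` of a partition: the inversion sign of the word
`1 2 … λ₁ 1 2 … λ₂ ⋯`. -/
def partSign (L : List ℕ) : ℤ :=
  (-1) ^ invCount ((L.map (fun p => List.range' 1 p)).flatten)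

/-- The Young subgroup `Y_s`: the stabilizer of the word `s` in `S_m`. -/
def Ysub {m : ℕ} (s : Fin m → ℕ) : Set (Equiv.Perm (Fin m)) := {π | pact π s = s}

/-- `G(s,t) = {π ∈ S_m : sgn_s(π·t) ≠ 0}`. -/
def Gst {m : ℕ} (s t : Fin m → ℕ) : Set (Equiv.Perm (Fin m)) :=
  {π | sgnWord s (pact π t) ≠ 0}

/-!
For a word `s` of weight `λ`, `sgn_s(u) ≠ 0` says exactly that `p ↦ (s p, u p)` is injective
and lands in the Young diagram of `λ`, i.e. `1 ≤ u p ≤ λ_{s p}`. The diagram of the conjugate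
partition `λ'` is the transpose of that of `λ`, so this condition for `(s, w·t)` becomes, after
reindexing positions by `w` and swapping coordinates, the same condition for `(t, w⁻¹·s)`.
-/

lemma sum_range_getD {L : List ℕ} {n : ℕ} (hlen : L.length ≤ n) :
    ∑ i ∈ range n, L.getD i 0 = L.sum := by
  induction L generalizing n with
  | nil => simp
  | cons a L ih =>
    obtain ⟨n, rfl⟩ := Nat.exists_eq_add_one_of_ne_zero (by simp at hlen; omega : n ≠ 0)
    rw [Finset.sum_range_succ']
    simp only [List.getD_cons_succ, List.getD_cons_zero, List.sum_cons,
      ih (Nat.le_of_succ_le_succ hlen), add_comm]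

lemma le_headD_of_mem {L : List ℕ} (hL : L.Pairwise (· ≥ ·)) {p : ℕ} (hp : p ∈ L) :
    p ≤ L.headD 0 := by
  cases L with
  | nil => simp at hp
  | cons a L =>
    rcases List.mem_cons.1 hp with rfl | hp
    · exact le_rfl
    · exact (List.pairwise_cons.1 hL).1 p hp

lemma getD_le_headD {L : List ℕ} (hL : L.Pairwise (· ≥ ·)) (i : ℕ) :
    L.getD i 0 ≤ L.headD 0 := by
  by_cases hi : i < L.length
  · rw [List.getD_eq_getElem _ _ hi]
    exact le_headD_of_mem hL (List.getElem_mem hi)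
  · rw [List.getD_eq_default _ _ (not_lt.1 hi)]
    exact Nat.zero_le _

lemma lt_countP_iff {L : List ℕ} (hL : L.Pairwise (· ≥ ·)) (i j : ℕ) :
    i < L.countP (fun p => j < p) ↔ j < L.getD i 0 := by
  induction L generalizing i with
  | nil => simp
  | cons a L ih =>
    obtain ⟨ha, hL'⟩ := List.pairwise_cons.1 hL
    by_cases hja : j < a
    · rw [List.countP_cons_of_pos (by simpa using hja)]
      cases i with
      | zero => simpa using hja
      | succ i => simpa using ih hL' i
    · have hzero : L.countP (fun p => j < p) = 0 :=
        List.countP_eq_zero.2 fun p hp => by have := ha p hp; simp only [decide_eq_true_eq]; omega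
      have := getD_le_headD hL i
      simp only [List.countP_cons, hzero, hja, List.headD_cons, decide_false, Bool.false_eq_true,
        if_false] at this ⊢
      omega

lemma sum_range_countP_lt {L : List ℕ} {n : ℕ} (hn : ∀ p ∈ L, p ≤ n) :
    ∑ j ∈ range n, L.countP (fun p => j < p) = L.sum := by
  induction L with
  | nil => simp
  | cons a L ih =>
    have hfilter : {j ∈ range n | j < a} = range a := by
      ext j
      have := hn a (List.mem_cons_self ..)
      simp only [mem_filter, mem_range]
      omega
    simp only [List.countP_cons, decide_eq_true_eq, Finset.sum_add_distrib, Finset.sum_boole,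
      hfilter, card_range, Nat.cast_id, List.sum_cons,
      ih fun p hp => hn p (List.mem_cons_of_mem a hp)]
    omega

lemma length_conjList (L : List ℕ) : (conjList L).length = L.headD 0 := by
  simp [conjList]

lemma conjList_getD {L : List ℕ} (hL : L.Pairwise (· ≥ ·)) (j : ℕ) :
    (conjList L).getD j 0 = L.countP (fun p => j < p) := by
  by_cases hj : j < L.headD 0
  · rw [List.getD_eq_getElem _ _ (by simpa [conjList] using hj)]
    simp [conjList]
  · rw [List.getD_eq_default _ _ (by simpa [conjList] using hj), eq_comm, List.countP_eq_zero]
    intro p hp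
    have := le_headD_of_mem hL hp
    simp only [decide_eq_true_eq]
    omega

lemma sum_conjList {L : List ℕ} (hL : L.Pairwise (· ≥ ·)) : (conjList L).sum = L.sum := by
  rw [← sum_range_getD (length_conjList L).le]
  simp only [conjList_getD hL]
  exact sum_range_countP_lt fun p hp => le_headD_of_mem hL hp

lemma lt_conjList_getD_iff {L : List ℕ} (hL : L.Pairwise (· ≥ ·)) (i j : ℕ) :
    i < (conjList L).getD j 0 ↔ j < L.getD i 0 := by
  rw [conjList_getD hL, lt_countP_iff hL]

lemma mem_Icc_getD_iff_mem_Icc_conjList_getD {L : List ℕ} (hL : L.Pairwise (· ≥ ·)) {a b : ℕ}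
    (ha : 1 ≤ a) (hb : 1 ≤ b) :
    b ∈ Icc 1 (L.getD (a - 1) 0) ↔ a ∈ Icc 1 ((conjList L).getD (b - 1) 0) := by
  have := lt_conjList_getD_iff hL (a - 1) (b - 1)
  simp only [mem_Icc]
  omega

lemma seqSgn_ne_zero_iff (l : List ℕ) :
    seqSgn l ≠ 0 ↔ l.Nodup ∧ ∀ x ∈ l, x ∈ Icc 1 l.length := by
  rw [seqSgn]
  split_ifs with h
  · have hperm : l.Perm (List.range' 1 l.length) := Multiset.coe_eq_coe.1 h
    simp only [ne_eq, pow_eq_zero_iff', neg_eq_zero, one_ne_zero, false_and, not_false_eq_true,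
      true_iff]
    refine ⟨hperm.nodup_iff.2 List.nodup_range', fun x hx => ?_⟩
    have := List.mem_range'_1.1 (hperm.subset hx)
    simp only [mem_Icc]
    omega
  · simp only [ne_eq, not_true_eq_false, false_iff, not_and, not_forall]
    intro hnd
    by_contra! hsub
    refine h (Multiset.coe_eq_coe.2
      ((List.subperm_of_subset hnd fun x hx => ?_).perm_of_length_le (by simp)))
    have := mem_Icc.1 (hsub x hx)
    exact List.mem_range'_1.2 (by omega)

lemma length_blockList {m : ℕ} (s : Fin m → ℕ) (a : ℕ) :
    (blockList s a).length = #{p | s p = a} := by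
  rw [Finset.card_def, Finset.filter_val, Fin.univ_def]
  rfl

lemma sgnWord_ne_zero_iff {m : ℕ} (s u : Fin m → ℕ) :
    sgnWord s u ≠ 0 ↔ ∀ i < m, Set.InjOn u {p | s p = i + 1} ∧
      ∀ p, s p = i + 1 → u p ∈ Icc 1 #{q | s q = i + 1} := by
  have hnodup : ∀ i, (blockList s i).Nodup := fun i => (List.nodup_finRange m).filter _
  simp only [sgnWord, Finset.prod_ne_zero_iff, mem_range, seqSgn_ne_zero_iff,
    List.nodup_map_iff_inj_on (hnodup _), List.forall_mem_map, List.length_map, length_blockList]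
  simp [blockList, Set.InjOn]

lemma hasWeight.mem_Icc {m n : ℕ} {L : List ℕ} {w : Fin m → ℕ} (hw : hasWeight w L)
    (hlen : L.length ≤ n) (hsum : L.sum = m) (p : Fin m) : w p ∈ Icc 1 n := by
  -- the blocks of the letters `1, …, n` already fill all `m` positions
  have hcard : #{q | w q ∈ Icc 1 n} = #(univ : Finset (Fin m)) := by
    rw [← Finset.sum_card_fiberwise_eq_card_filter, card_univ, Fintype.card_fin]
    rw [← Finset.Ico_add_one_right_eq_Icc, Finset.sum_Ico_eq_sum_range]
    simp only [add_tsub_cancel_right, add_comm 1]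
    rw [Finset.sum_congr rfl fun i _ => hw i, sum_range_getD hlen, hsum]
  exact Finset.card_filter_eq_iff.1 hcard p (mem_univ p)

lemma sgnWord_ne_zero_iff_of_hasWeight {m : ℕ} {L : List ℕ} {s : Fin m → ℕ} (u : Fin m → ℕ)
    (hs : hasWeight s L) (hcov : ∀ p, s p ∈ Icc 1 m) :
    sgnWord s u ≠ 0 ↔
      Function.Injective (fun p => (s p, u p)) ∧ ∀ p, u p ∈ Icc 1 (L.getD (s p - 1) 0) := by
  have hletter : ∀ p, s p - 1 < m ∧ s p = s p - 1 + 1 := fun p => by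
    have := mem_Icc.1 (hcov p); omega
  rw [sgnWord_ne_zero_iff]
  constructor
  · intro h
    refine ⟨fun p p' hpp' => ?_, fun p => ?_⟩
    · obtain ⟨hs_eq, hu_eq⟩ := Prod.ext_iff.1 hpp'
      exact (h _ (hletter p).1).1 (hletter p).2 ((hletter p).2 ▸ hs_eq.symm) hu_eq
    · rw [← hs]
      exact (h _ (hletter p).1).2 p (hletter p).2
  · rintro ⟨hinj, hcell⟩ i -
    refine ⟨fun p hp p' hp' hu => hinj (Prod.ext (hp.trans hp'.symm) hu), fun p hp => ?_⟩
    rw [hs]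
    simpa only [hp, Nat.add_sub_cancel] using hcell p

lemma injective_pair_perm_iff {α β γ : Type*} (e : Equiv.Perm α) (f : α → β) (g : α → γ) :
    Function.Injective (fun p => (f p, g (e⁻¹ p))) ↔
      Function.Injective (fun q => (g q, f (e q))) := by
  have : (fun q => (g q, f (e q))) = Prod.swap ∘ (fun p => (f p, g (e⁻¹ p))) ∘ e := by
    ext q <;> simp
  rw [this, Prod.swap_injective.of_comp_iff, EquivLike.injective_comp]

/-- `G(s,t)⁻¹ = G(t,s)`: `w ∈ G(s,t) ↔ w⁻¹ ∈ G(t,s)`. -/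
theorem stmt2 {m : ℕ} (L : List ℕ) (hL : IsPartitionOf m L)
    (s t : Fin m → ℕ) (hs : hasWeight s L) (ht : hasWeight t (conjList L)) :
    ∀ w : Equiv.Perm (Fin m), w ∈ Gst s t ↔ w⁻¹ ∈ Gst t s := by
  obtain ⟨hsorted, hpos, hsum⟩ := hL
  have hlen : L.length ≤ m := hsum ▸ L.length_le_sum_of_one_le hpos
  have hconj_len : (conjList L).length ≤ m := by
    rw [length_conjList, ← hsum]
    cases L <;> simp
  have hs_mem := hs.mem_Icc hlen hsum
  have ht_mem := ht.mem_Icc hconj_len ((sum_conjList hsorted).trans hsum)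
  intro w
  simp only [Gst, Set.mem_ofPred_eq, pact, inv_inv, sgnWord_ne_zero_iff_of_hasWeight _ hs hs_mem,
    sgnWord_ne_zero_iff_of_hasWeight _ ht ht_mem]
  refine and_congr (injective_pair_perm_iff w s t) ?_
  rw [w.symm.forall_congr_left]
  refine forall_congr' fun q => ?_
  simp only [Equiv.symm_symm, Equiv.Perm.coe_inv, Equiv.symm_apply_apply]
  exact mem_Icc_getD_iff_mem_Icc_conjList_getD hsorted
    (mem_Icc.1 (hs_mem _)).1 (mem_Icc.1 (ht_mem q)).1
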